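/- arXiv:2106.00561 — 7 statements merged into one kernel-verified Lean document; each statement's English description precedes it below -/
import Mathlib

section
/- Let (Ω, F, P) be a probability space, let G, E ∈ F be events, and let α, β, α̂ ∈ [0,1] with β < 1 and α̂ ≤ (α − β)/(1 − β). If P(E) ≥ 1 − β and P(G ∩ E) ≥ (1 − α̂)·P(E), then P(G) ≥ 1 − α. -/
open MeasureTheory

/-- Probabilistic core of Proposition 3: if the ambiguity set covers the true
distribution with probability at least `1 - β` (event `E`), and conditionally on `E`
the constraint event `G` has probability at least `1 - αhat` with
`αhat ≤ (α - β)/(1 - β)`, then `G` has probability at least `1 - α`. -/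
theorem stmt0 {Ω : Type*} [MeasurableSpace Ω] (μ : Measure Ω) [IsProbabilityMeasure μ]
    (G E : Set Ω) (hG : MeasurableSet G) (hE : MeasurableSet E)
    (α β αhat : ℝ) (hα : α ∈ Set.Icc (0:ℝ) 1) (hβ : β ∈ Set.Icc (0:ℝ) 1)
    (hαhat : αhat ∈ Set.Icc (0:ℝ) 1) (hβ1 : β < 1)
    (hle : αhat ≤ (α - β) / (1 - β))
    (hPE : 1 - β ≤ (μ E).toReal)
    (hPGE : (1 - αhat) * (μ E).toReal ≤ (μ (G ∩ E)).toReal) :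
    1 - α ≤ (μ G).toReal := by
  have hmono : (μ (G ∩ E)).toReal ≤ (μ G).toReal := by
    apply ENNReal.toReal_mono (measure_ne_top μ G)
    exact measure_mono Set.inter_subset_left
  have h1 : (μ E).toReal ≤ 1 := by
    have := prob_le_one (μ := μ) (s := E)
    simpa using ENNReal.toReal_mono (by simp) this
  have hle' : αhat * (1 - β) ≤ α - β := by
    exact (le_div_iff₀ (by linarith)).mp hle
  obtain ⟨h1a, h2a⟩ := hα; obtain ⟨h1b, h2b⟩ := hβ; obtain ⟨h1c, h2c⟩ := hαhat
  nlinarith [hPGE, hmono, hPE, h1]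
end

section
/- Let d ≥ 1, α ∈ (0,1], ξ ∈ ℝ^d, and let A ⊆ Δ_d be a nonempty set of probability vectors. Then sup_{p ∈ A} AVaR_α^p[ξ] = sup { Σ_{i=1}^d μ_i ξ_i : μ ∈ Δ_d and there exists p ∈ A with α·μ_i ≤ p_i for all i }. In particular, the worst-case average value-at-risk over A is again the support function of a subset of the simplex, i.e., a coherent risk measure. -/
open Finset

/-- The average value-at-risk at level `α` with reference distribution `p` of the
finitely supported random variable `ξ`:
`AVaR_α^p[ξ] = inf_{t ∈ ℝ} ( t + (1/α) Σ_i p_i · max (ξ_i − t) 0 )`. -/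
noncomputable def avar {d : ℕ} (α : ℝ) (p ξ : Fin d → ℝ) : ℝ :=
  ⨅ t : ℝ, t + α⁻¹ * ∑ i, p i * max (ξ i - t) 0

lemma pointwise_le {d : ℕ} {α : ℝ} (hα : 0 < α) {p μ ξ : Fin d → ℝ}
    (hμ0 : ∀ i, 0 ≤ μ i) (hμ1 : ∑ i, μ i = 1) (hfeas : ∀ i, α * μ i ≤ p i) (t : ℝ) :
    ∑ i, μ i * ξ i ≤ t + α⁻¹ * ∑ i, p i * max (ξ i - t) 0 := by
  have h1 : ∑ i, μ i * ξ i = t + ∑ i, μ i * (ξ i - t) := by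
    simp only [mul_sub, Finset.sum_sub_distrib, ← Finset.sum_mul, hμ1]
    ring
  rw [h1, Finset.mul_sum]
  refine (add_le_add_iff_left t).mpr (Finset.sum_le_sum fun i _ => ?_)
  have hμle : μ i ≤ α⁻¹ * p i := by
    rw [← div_eq_inv_mul, le_div_iff₀ hα, mul_comm]
    exact hfeas i
  calc μ i * (ξ i - t) ≤ μ i * max (ξ i - t) 0 := by
        gcongr
        · exact hμ0 i
        · exact le_max_left _ _
    _ ≤ α⁻¹ * (p i * max (ξ i - t) 0) := by
        rw [← mul_assoc]
        gcongr


lemma avar_ge {d : ℕ} {α : ℝ} (hα : 0 < α) {p μ ξ : Fin d → ℝ}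
    (hμ0 : ∀ i, 0 ≤ μ i) (hμ1 : ∑ i, μ i = 1) (hfeas : ∀ i, α * μ i ≤ p i) :
    ∑ i, μ i * ξ i ≤ avar α p ξ :=
  le_ciInf (pointwise_le hα hμ0 hμ1 hfeas)

lemma avar_attained {d : ℕ} (hd : 1 ≤ d) {α : ℝ} (hα : 0 < α) (hα1 : α ≤ 1)
    {p : Fin d → ℝ} (hp : p ∈ stdSimplex ℝ (Fin d)) (ξ : Fin d → ℝ) :
    ∃ μ : Fin d → ℝ, (∀ i, 0 ≤ μ i) ∧ (∑ i, μ i = 1) ∧ (∀ i, α * μ i ≤ p i) ∧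
      avar α p ξ ≤ ∑ i, μ i * ξ i := by
  haveI : Nonempty (Fin d) := ⟨⟨0, hd⟩⟩
  obtain ⟨hp0, hp1⟩ := hp
  set g : ℝ → ℝ := fun v => ∑ i ∈ univ.filter (fun i => v < ξ i), p i with hg
  set C : Finset ℝ := (univ.image ξ).filter (fun v => g v ≤ α) with hC
  have hCne : C.Nonempty := by
    refine ⟨univ.sup' univ_nonempty ξ, ?_⟩
    rw [hC, mem_filter]
    constructor
    · obtain ⟨j, _, hj⟩ := Finset.exists_mem_eq_sup' univ_nonempty ξ
      rw [hj]
      exact mem_image_of_mem ξ (mem_univ j)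
    · have : univ.filter (fun i => univ.sup' univ_nonempty ξ < ξ i) = ∅ := by
        apply Finset.filter_eq_empty_iff.mpr
        intro i _
        exact not_lt.mpr (Finset.le_sup' ξ (mem_univ i))
      simp only [hg, this, Finset.sum_empty]
      exact hα.le
  set t : ℝ := C.min' hCne with htdef
  have htC : t ∈ C := C.min'_mem hCne
  have hPSα : g t ≤ α := (Finset.mem_filter.mp htC).2
  -- α ≤ P(ξ ≥ t)
  have hge : α ≤ ∑ i ∈ univ.filter (fun i => t ≤ ξ i), p i := by
    by_contra h
    push_neg at h
    by_cases hcase : ((univ.image ξ).filter (fun v => v < t)).Nonempty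
    · set v := ((univ.image ξ).filter (fun v => v < t)).max' hcase with hv
      have hvmem := Finset.max'_mem _ hcase
      have hvlt : v < t := (Finset.mem_filter.mp hvmem).2
      have hsets : univ.filter (fun i => v < ξ i) = univ.filter (fun i => t ≤ ξ i) := by
        ext i
        simp only [mem_filter, mem_univ, true_and]
        constructor
        · intro hvi
          by_contra hti
          push_neg at hti
          have : ξ i ∈ (univ.image ξ).filter (fun w => w < t) :=
            Finset.mem_filter.mpr ⟨mem_image_of_mem ξ (mem_univ i), hti⟩
          exact absurd (Finset.le_max' _ _ this) (not_le.mpr hvi)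
        · intro hti; linarith
      have hvC : v ∈ C := by
        rw [hC, mem_filter]
        refine ⟨(Finset.mem_filter.mp hvmem).1, ?_⟩
        rw [hg]; simp only []
        rw [hsets]
        exact h.le
      exact absurd (Finset.min'_le _ _ hvC) (not_le.mpr hvlt)
    · have hall : univ.filter (fun i => t ≤ ξ i) = univ := by
        apply Finset.filter_true_of_mem
        intro i _
        by_contra hti
        push_neg at hti
        exact hcase ⟨ξ i, Finset.mem_filter.mpr ⟨mem_image_of_mem ξ (mem_univ i), hti⟩⟩
      rw [hall, hp1] at h
      linarith
  set S : Finset (Fin d) := univ.filter (fun i => t < ξ i) with hS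
  set E : Finset (Fin d) := univ.filter (fun i => ξ i = t) with hE
  set PS : ℝ := ∑ i ∈ S, p i with hPS
  set PE : ℝ := ∑ i ∈ E, p i with hPE
  have hPSle : PS ≤ α := hPSα
  have hPE0 : 0 ≤ PE := Finset.sum_nonneg fun i _ => hp0 i
  have hsplit : α ≤ PS + PE := by
    have key : ∑ i ∈ univ.filter (fun i => t ≤ ξ i), p i = PS + PE := by
      rw [hPS, hPE, hS, hE]
      rw [← Finset.sum_filter_add_sum_filter_not (univ.filter (fun i => t ≤ ξ i))
        (fun i => t < ξ i) p]
      congr 1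
      · congr 1
        rw [Finset.filter_filter]
        apply Finset.filter_congr
        intro i _
        constructor
        · exact fun h => h.2
        · exact fun h => ⟨h.le, h⟩
      · congr 1
        rw [Finset.filter_filter]
        apply Finset.filter_congr
        intro i _
        constructor
        · intro h; linarith [h.1, not_lt.mp h.2]
        · intro h; exact ⟨h.ge, by linarith [h.le]⟩
    linarith [hge, key]
  set c : ℝ := if PE = 0 then 0 else (α - PS) / (α * PE) with hc
  have hc0 : 0 ≤ c := by
    rw [hc]
    split_ifs with hne
    · exact le_refl 0
    · exact div_nonneg (by linarith) (mul_nonneg hα.le hPE0)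
  have hPSeq : PE = 0 → PS = α := by
    intro hne
    rw [hne] at hsplit
    linarith
  have hcPE : c * PE = (α - PS) / α := by
    rw [hc]
    split_ifs with hne
    · rw [hne, hPSeq hne]
      simp
    · field_simp
  have hαc1 : α * c ≤ 1 := by
    rw [hc]
    split_ifs with hne
    · simp
    · have hPEpos : 0 < PE := lt_of_le_of_ne hPE0 (Ne.symm hne)
      rw [mul_div_assoc', div_le_one (by positivity)]
      nlinarith
  set μ : Fin d → ℝ := fun i => if t < ξ i then p i / α else if ξ i = t then p i * c else 0
    with hμ
  have hdecomp : ∀ i, μ i = (if t < ξ i then p i / α else 0) + (if ξ i = t then p i * c else 0) := by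
    intro i
    rw [hμ]
    by_cases h1 : t < ξ i
    · have h2 : ¬ (ξ i = t) := by intro h; rw [h] at h1; exact lt_irrefl t h1
      simp [h1, h2]
    · simp [h1]
  have hμ0 : ∀ i, 0 ≤ μ i := by
    intro i
    rw [hμ]
    dsimp only
    split_ifs
    · exact div_nonneg (hp0 i) hα.le
    · exact mul_nonneg (hp0 i) hc0
    · exact le_refl 0
  have hμsum : ∑ i, μ i = 1 := by
    have : ∑ i, μ i = PS / α + PE * c := by
      simp only [hdecomp]
      rw [Finset.sum_add_distrib, Finset.sum_ite, Finset.sum_ite]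
      simp only [Finset.sum_const_zero, add_zero]
      rw [hPS, hPE, hS, hE, Finset.sum_div, ← Finset.sum_mul]
    rw [this]
    have h2 : PE * c = (α - PS) / α := by rw [mul_comm]; exact hcPE
    rw [h2]
    field_simp
    ring
  have hμfeas : ∀ i, α * μ i ≤ p i := by
    intro i
    rw [hμ]
    dsimp only
    split_ifs with h1 h2
    · rw [mul_div_cancel₀ _ (ne_of_gt hα)]
    · calc α * (p i * c) = p i * (α * c) := by ring
        _ ≤ p i * 1 := by exact mul_le_mul_of_nonneg_left hαc1 (hp0 i)
        _ = p i := mul_one _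
    · rw [mul_zero]; exact hp0 i
  refine ⟨μ, hμ0, hμsum, hμfeas, ?_⟩
  have hval : ∑ i, μ i * ξ i = t + α⁻¹ * ∑ i, p i * max (ξ i - t) 0 := by
    have hL : ∑ i, μ i * ξ i = (∑ i ∈ S, p i * ξ i) / α + PE * (c * t) := by
      have : ∀ i, μ i * ξ i =
          (if t < ξ i then p i * ξ i / α else 0) + (if ξ i = t then p i * (c * t) else 0) := by
        intro i
        rw [hμ]
        dsimp only
        by_cases h1 : t < ξ i
        · have h2 : ¬ (ξ i = t) := by intro h; rw [h] at h1; exact lt_irrefl t h1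
          simp [h1, h2]
          ring
        · by_cases h2 : ξ i = t
          · simp [h1, h2]
            ring
          · simp [h1, h2]
      simp only [this]
      rw [Finset.sum_add_distrib, Finset.sum_ite, Finset.sum_ite]
      simp only [Finset.sum_const_zero, add_zero]
      rw [hPE, hE, hS, ← Finset.sum_div, ← Finset.sum_mul]
    have hR : ∑ i, p i * max (ξ i - t) 0 = (∑ i ∈ S, p i * ξ i) - t * PS := by
      have : ∀ i, p i * max (ξ i - t) 0 = if t < ξ i then p i * ξ i - p i * t else 0 := by
        intro i
        by_cases h1 : t < ξ i
        · rw [if_pos h1, max_eq_left (by linarith)]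
          ring
        · rw [if_neg h1, max_eq_right (by linarith [not_lt.mp h1]), mul_zero]
      simp only [this]
      rw [Finset.sum_ite, Finset.sum_const_zero, add_zero, Finset.sum_sub_distrib]
      rw [hPS, hS, ← Finset.sum_mul]
      ring
    rw [hL, hR]
    have h3 : PE * (c * t) = (α - PS) / α * t := by
      rw [← mul_assoc, mul_comm PE c, hcPE]
    rw [h3]
    field_simp
    ring
  rw [hval]
  have hbdd : BddBelow (Set.range fun s => s + α⁻¹ * ∑ i, p i * max (ξ i - s) 0) := by
    refine ⟨∑ i, p i * ξ i, ?_⟩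
    rintro x ⟨s, rfl⟩
    exact pointwise_le hα hp0 hp1 (fun i => mul_le_of_le_one_left (hp0 i) hα1) s
  exact ciInf_le hbdd t

/-- The worst-case average value-at-risk over a nonempty ambiguity set `A ⊆ Δ_d` is the
support function of the set `{μ ∈ Δ_d : ∃ p ∈ A, α·μ ≤ p}`, i.e. a coherent risk measure
induced by a subset of the simplex. -/
theorem stmt3 {d : ℕ} (hd : 1 ≤ d) (α : ℝ) (hα : α ∈ Set.Ioc (0:ℝ) 1) (ξ : Fin d → ℝ)
    (A : Set (Fin d → ℝ)) (hA : A.Nonempty) (hAsub : A ⊆ stdSimplex ℝ (Fin d)) :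
    sSup {x : ℝ | ∃ p ∈ A, x = avar α p ξ} =
      sSup {x : ℝ | ∃ μ ∈ stdSimplex ℝ (Fin d),
        (∃ p ∈ A, ∀ i, α * μ i ≤ p i) ∧ x = ∑ i, μ i * ξ i} := by
  haveI : Nonempty (Fin d) := ⟨⟨0, hd⟩⟩
  obtain ⟨hα0, hα1⟩ := hα
  set M : ℝ := univ.sup' univ_nonempty ξ with hM
  have hsumM : ∀ μ : Fin d → ℝ, (∀ i, 0 ≤ μ i) → (∑ i, μ i = 1) → ∑ i, μ i * ξ i ≤ M := by
    intro μ h0 h1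
    calc ∑ i, μ i * ξ i ≤ ∑ i, μ i * M := by
          refine Finset.sum_le_sum fun i _ => ?_
          exact mul_le_mul_of_nonneg_left (Finset.le_sup' ξ (mem_univ i)) (h0 i)
      _ = M := by rw [← Finset.sum_mul, h1, one_mul]
  have havarM : ∀ p ∈ A, avar α p ξ ≤ M := by
    intro p hpA
    obtain ⟨hp0, hp1⟩ := hAsub hpA
    have hbdd : BddBelow (Set.range fun s => s + α⁻¹ * ∑ i, p i * max (ξ i - s) 0) := by
      refine ⟨∑ i, p i * ξ i, ?_⟩
      rintro x ⟨s, rfl⟩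
      exact pointwise_le hα0 hp0 hp1 (fun i => mul_le_of_le_one_left (hp0 i) hα1) s
    have := ciInf_le hbdd M
    refine le_trans this ?_
    have hz : ∑ i, p i * max (ξ i - M) 0 = 0 := by
      refine Finset.sum_eq_zero fun i _ => ?_
      rw [max_eq_right (by linarith [Finset.le_sup' ξ (mem_univ i)]), mul_zero]
    rw [hz, mul_zero, add_zero]
  obtain ⟨p₀, hp₀⟩ := hA
  apply le_antisymm
  · have hne1 : {x : ℝ | ∃ p ∈ A, x = avar α p ξ}.Nonempty := ⟨avar α p₀ ξ, p₀, hp₀, rfl⟩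
    apply csSup_le hne1
    rintro x ⟨p, hpA, rfl⟩
    obtain ⟨μ, hμ0, hμ1, hfeas, hle⟩ := avar_attained hd hα0 hα1 (hAsub hpA) ξ
    refine le_trans hle (le_csSup ⟨M, ?_⟩ ?_)
    · rintro y ⟨ν, hνΔ, _, rfl⟩
      exact hsumM ν hνΔ.1 hνΔ.2
    · exact ⟨μ, ⟨hμ0, hμ1⟩, ⟨p, hpA, hfeas⟩, rfl⟩
  · obtain ⟨μ₀, hμ₀0, hμ₀1, hfeas₀, _⟩ := avar_attained hd hα0 hα1 (hAsub hp₀) ξ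
    have hne2 : {x : ℝ | ∃ μ ∈ stdSimplex ℝ (Fin d),
        (∃ p ∈ A, ∀ i, α * μ i ≤ p i) ∧ x = ∑ i, μ i * ξ i}.Nonempty :=
      ⟨∑ i, μ₀ i * ξ i, μ₀, ⟨hμ₀0, hμ₀1⟩, ⟨p₀, hp₀, hfeas₀⟩, rfl⟩
    apply csSup_le hne2
    rintro x ⟨μ, hμΔ, ⟨p, hpA, hfeas⟩, rfl⟩
    refine le_trans (avar_ge hα0 hμΔ.1 hμΔ.2 hfeas) (le_csSup ⟨M, ?_⟩ ⟨p, hpA, rfl⟩)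
    rintro y ⟨q, hqA, rfl⟩
    exact havarM q hqA
end

section
/- Let X_1, …, X_m be i.i.d. random variables taking values in {1, …, d} with common distribution p ∈ Δ_d, and let p̂ be the empirical distribution p̂_i = (1/m) Σ_{t=1}^m 1{X_t = i}. Then for every β ∈ (0,1], P[ D_KL(p̂, p) > ( log C(m + d − 1, d − 1) − log β )/m ] ≤ β, where C(n, k) denotes the binomial coefficient. -/
open MeasureTheory Finset

/-- The Kullback–Leibler divergence `D_KL(q, p) = Σ_i q_i·log(q_i/p_i)` between finitely
supported distributions, with the conventions `0·log(0/a) = 0` and `D_KL(q,p) = +∞` if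
`q_i > 0 = p_i` for some `i`. -/
noncomputable def klDivFin {d : ℕ} (q p : Fin d → ℝ) : EReal :=
  ∑ i, if q i = 0 then (0 : EReal)
       else if p i = 0 then (⊤ : EReal)
       else ((q i * Real.log (q i / p i) : ℝ) : EReal)

namespace Stmt6Aux

variable {d m : ℕ}

/-- The count vector of a tuple of samples. -/
def cnt (f : Fin m → Fin d) (i : Fin d) : ℕ := (univ.filter fun t => f t = i).card

lemma sum_cnt (f : Fin m → Fin d) : ∑ i, cnt f i = m := by
  classical
  have h := Finset.card_eq_sum_card_fiberwise
    (f := f) (s := (univ : Finset (Fin m))) (t := (univ : Finset (Fin d)))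
    (fun x _ => mem_univ _)
  simpa [cnt] using h.symm

lemma prod_comp_eq (g : Fin d → ℝ) (f : Fin m → Fin d) :
    ∏ t, g (f t) = ∏ i, g i ^ cnt f i := by
  classical
  calc ∏ t, g (f t)
      = ∏ i, ∏ t ∈ univ.filter (fun t => f t = i), g (f t) :=
        (Finset.prod_fiberwise univ f _).symm
    _ = ∏ i, g i ^ cnt f i := by
        refine Finset.prod_congr rfl fun i _ => ?_
        rw [show (∏ t ∈ univ.filter (fun t => f t = i), g (f t))
              = ∏ _t ∈ univ.filter (fun t => f t = i), g i from
            Finset.prod_congr rfl fun t ht => by rw [(Finset.mem_filter.mp ht).2]]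
        simp [cnt]

lemma ereal_coe_sum {α : Type*} (s : Finset α) (f : α → ℝ) :
    ((∑ x ∈ s, f x : ℝ) : EReal) = ∑ x ∈ s, ((f x : ℝ) : EReal) := by
  classical
  induction s using Finset.cons_induction with
  | empty => simp
  | cons a s ha ih => rw [Finset.sum_cons, Finset.sum_cons, EReal.coe_add, ih]

/-- The type (multiset of values) of a tuple of samples. -/
def symOf (f : Fin m → Fin d) : Sym (Fin d) m :=
  ⟨Multiset.map f (univ : Finset (Fin m)).val, by simp⟩

lemma cnt_eq_count (f : Fin m → Fin d) (i : Fin d) :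
    cnt f i = Multiset.count i (Multiset.map f (univ : Finset (Fin m)).val) := by
  classical
  rw [Multiset.count_map, cnt,
    show (Multiset.filter (fun a => i = f a) (univ : Finset (Fin m)).val)
      = Multiset.filter (fun a => f a = i) (univ : Finset (Fin m)).val from
    Multiset.filter_congr (fun x _ => ⟨Eq.symm, Eq.symm⟩)]
  rfl

lemma cnt_eq_of_symOf_eq {f g : Fin m → Fin d} (h : symOf f = symOf g) : cnt f = cnt g := by
  funext i
  rw [cnt_eq_count, cnt_eq_count]
  exact congrArg (Multiset.count i) (congrArg Subtype.val h)

/-- Per-type bound: the probability of all sample tuples of a fixed type whose empirical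
distribution is far from `p` (in KL) is at most `β / C(m+d-1, d-1)`. -/
lemma fiber_bound (hd : 1 ≤ d) (hm : 1 ≤ m) (p : Fin d → ℝ)
    (hp0 : ∀ i, 0 ≤ p i) (β : ℝ) (hβ0 : 0 < β)
    (F : Finset (Fin m → Fin d))
    (hF : ∀ f ∈ F,
      (((Real.log ((m + d - 1).choose (d - 1)) - Real.log β) / m : ℝ) : EReal)
        < klDivFin (fun i => (cnt f i : ℝ) / m) p)
    (hFs : ∀ f ∈ F, ∀ g ∈ F, cnt f = cnt g) :
    ∑ f ∈ F, ∏ t, p (f t) ≤ β / ((m + d - 1).choose (d - 1)) := by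
  classical
  set N : ℕ := (m + d - 1).choose (d - 1) with hNdef
  have hNpos : (0:ℝ) < N := by
    have : 0 < N := Nat.choose_pos (by omega)
    exact_mod_cast this
  set ε : ℝ := (Real.log N - Real.log β) / m with hεdef
  rcases F.eq_empty_or_nonempty with hFe | ⟨f0, hf0⟩
  · rw [hFe, Finset.sum_empty]
    exact div_nonneg hβ0.le hNpos.le
  set k : Fin d → ℕ := cnt f0 with hkdef
  have hcnt : ∀ f ∈ F, cnt f = k := fun f hf => hFs f hf f0 hf0
  have hmpos : (0:ℝ) < m := by exact_mod_cast hm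
  by_cases hzero : ∃ i, k i ≠ 0 ∧ p i = 0
  · obtain ⟨i0, hki0, hpi0⟩ := hzero
    have hz : ∀ f ∈ F, ∏ t, p (f t) = 0 := by
      intro f hf
      rw [prod_comp_eq, hcnt f hf]
      exact Finset.prod_eq_zero (mem_univ i0) (by rw [hpi0]; exact zero_pow hki0)
    rw [Finset.sum_congr rfl hz, Finset.sum_const, smul_zero]
    exact div_nonneg hβ0.le hNpos.le
  · push_neg at hzero
    set q : Fin d → ℝ := fun i => (k i : ℝ) / m with hqdef
    have hq0 : ∀ i, q i = 0 ↔ k i = 0 := by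
      intro i
      simp [hqdef, div_eq_zero_iff, hmpos.ne']
    have hqnonneg : ∀ i, 0 ≤ q i := fun i => by positivity
    set Dr : ℝ := ∑ i, (if k i = 0 then 0 else q i * Real.log (q i / p i)) with hDr
    have hkl : klDivFin q p = ((Dr : ℝ) : EReal) := by
      rw [hDr, ereal_coe_sum, klDivFin]
      refine Finset.sum_congr rfl fun i _ => ?_
      by_cases hki : k i = 0
      · simp [hki, (hq0 i).mpr hki]
      · rw [if_neg ((not_iff_not.mpr (hq0 i)).mpr hki), if_neg (hzero i hki), if_neg hki]
    have key : ∀ i, p i ^ k i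
        = Real.exp (-(if k i = 0 then 0 else (k i : ℝ) * Real.log (q i / p i))) * q i ^ k i := by
      intro i
      by_cases hki : k i = 0
      · simp [hki]
      · have hpi : 0 < p i := (hp0 i).lt_of_ne (Ne.symm (hzero i hki))
        have hqi : 0 < q i := by
          have : 0 < (k i : ℝ) := by exact_mod_cast Nat.pos_of_ne_zero hki
          rw [hqdef]; positivity
        rw [if_neg hki, Real.log_div hqi.ne' hpi.ne',
          show -((k i : ℝ) * (Real.log (q i) - Real.log (p i)))
            = (k i : ℝ) * Real.log (p i) - (k i : ℝ) * Real.log (q i) by ring,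
          Real.exp_sub, Real.exp_nat_mul, Real.exp_nat_mul, Real.exp_log hpi, Real.exp_log hqi]
        field_simp
    have hmDr : (m : ℝ) * Dr = ∑ i, (if k i = 0 then 0 else (k i : ℝ) * Real.log (q i / p i)) := by
      rw [hDr, Finset.mul_sum]
      refine Finset.sum_congr rfl fun i _ => ?_
      by_cases hki : k i = 0
      · simp [hki]
      · rw [if_neg hki, if_neg hki, ← mul_assoc]
        congr 1
        rw [hqdef]
        field_simp
    have hprod : ∏ i, p i ^ k i = Real.exp (-((m : ℝ) * Dr)) * ∏ i, q i ^ k i := by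
      rw [Finset.prod_congr rfl (fun i _ => key i), Finset.prod_mul_distrib, ← Real.exp_sum]
      congr 2
      rw [hmDr, ← Finset.sum_neg_distrib]
    have step1 : ∑ f ∈ F, ∏ t, p (f t)
        = Real.exp (-((m : ℝ) * Dr)) * ∑ f ∈ F, ∏ t, q (f t) := by
      rw [Finset.mul_sum]
      refine Finset.sum_congr rfl fun f hf => ?_
      rw [prod_comp_eq p f, prod_comp_eq q f, hcnt f hf, hprod]
    have hsumq : ∑ i, q i = 1 := by
      rw [hqdef, ← Finset.sum_div,
        show (∑ i, ((k i : ℕ) : ℝ)) = ((∑ i, k i : ℕ) : ℝ) from (Nat.cast_sum _ _).symm,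
        hkdef, sum_cnt]
      field_simp
    have hsum_q_all : ∑ f : Fin m → Fin d, ∏ t, q (f t) = 1 := by
      have h := Finset.prod_univ_sum (fun _ : Fin m => (univ : Finset (Fin d)))
        (fun _ i => q i)
      rw [Fintype.piFinset_univ] at h
      rw [← h, Finset.prod_congr rfl (fun t _ => hsumq), Finset.prod_const, one_pow]
    have hle1 : ∑ f ∈ F, ∏ t, q (f t) ≤ 1 := by
      rw [← hsum_q_all]
      exact Finset.sum_le_sum_of_subset_of_nonneg (Finset.subset_univ F)
        (fun f _ _ => Finset.prod_nonneg fun t _ => hqnonneg (f t))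
    have hεDr : ε < Dr := by
      have h := hF f0 hf0
      rw [show (fun i => (cnt f0 i : ℝ) / m) = q from rfl, hkl] at h
      exact_mod_cast h
    have hsumnn : 0 ≤ ∑ f ∈ F, ∏ t, q (f t) :=
      Finset.sum_nonneg fun f _ => Finset.prod_nonneg fun t _ => hqnonneg (f t)
    calc ∑ f ∈ F, ∏ t, p (f t)
        = Real.exp (-((m : ℝ) * Dr)) * ∑ f ∈ F, ∏ t, q (f t) := step1
      _ ≤ Real.exp (-((m : ℝ) * Dr)) * 1 :=
          mul_le_mul_of_nonneg_left hle1 (Real.exp_nonneg _)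
      _ = Real.exp (-((m : ℝ) * Dr)) := mul_one _
      _ ≤ Real.exp (-((m : ℝ) * ε)) := Real.exp_le_exp.mpr (by nlinarith)
      _ = β / N := by
          rw [show -((m : ℝ) * ε) = Real.log β - Real.log N from by
            rw [hεdef]; field_simp; ring]
          rw [Real.exp_sub, Real.exp_log hβ0, Real.exp_log hNpos]

/-- The combinatorial core: summing the per-type bounds over all types. -/
lemma core (hd : 1 ≤ d) (hm : 1 ≤ m) (p : Fin d → ℝ)
    (hp0 : ∀ i, 0 ≤ p i) (β : ℝ) (hβ0 : 0 < β) :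
    ∑ f ∈ (univ.filter fun f : Fin m → Fin d =>
        (((Real.log ((m + d - 1).choose (d - 1)) - Real.log β) / m : ℝ) : EReal)
          < klDivFin (fun i => (cnt f i : ℝ) / m) p),
      ∏ t, p (f t) ≤ β := by
  classical
  set N : ℕ := (m + d - 1).choose (d - 1) with hNdef
  have hNpos : (0:ℝ) < N := by
    have : 0 < N := Nat.choose_pos (by omega)
    exact_mod_cast this
  set S : Finset (Fin m → Fin d) := univ.filter fun f =>
      (((Real.log ((m + d - 1).choose (d - 1)) - Real.log β) / m : ℝ) : EReal)
        < klDivFin (fun i => (cnt f i : ℝ) / m) p with hS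
  have hcard : Fintype.card (Sym (Fin d) m) = N := by
    rw [Sym.card_sym_eq_choose, Fintype.card_fin, hNdef,
      show d + m - 1 = m + d - 1 from by omega,
      ← Nat.choose_symm (show d - 1 ≤ m + d - 1 by omega),
      show m + d - 1 - (d - 1) = m from by omega]
  rw [← Finset.sum_fiberwise S symOf (fun f => ∏ t, p (f t))]
  calc ∑ s : Sym (Fin d) m, ∑ f ∈ S.filter (fun f => symOf f = s), ∏ t, p (f t)
      ≤ ∑ _s : Sym (Fin d) m, β / N := by
        refine Finset.sum_le_sum fun s _ => ?_
        refine fiber_bound hd hm p hp0 β hβ0 _ ?_ ?_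
        · intro f hf
          exact (Finset.mem_filter.mp ((Finset.mem_filter.mp hf).1)).2
        · intro f hf g hg
          exact cnt_eq_of_symOf_eq
            ((Finset.mem_filter.mp hf).2.trans (Finset.mem_filter.mp hg).2.symm)
    _ = (Fintype.card (Sym (Fin d) m) : ℝ) * (β / N) := by
        rw [Finset.sum_const, nsmul_eq_mul, Finset.card_univ]
    _ = β := by rw [hcard]; field_simp

end Stmt6Aux

/-- Kullback–Leibler concentration inequality (Proposition 2, sharpened via the method of
types as in Remark 4): for `m` i.i.d. samples from `p ∈ Δ_d`, the KL divergence of the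
empirical distribution from `p` exceeds `(log C(m+d−1, d−1) − log β)/m` with probability
at most `β`. -/
theorem stmt6 {Ω : Type*} [MeasurableSpace Ω] (μ : Measure Ω) [IsProbabilityMeasure μ]
    {d m : ℕ} (hd : 1 ≤ d) (hm : 1 ≤ m)
    (p : Fin d → ℝ) (hp : p ∈ stdSimplex ℝ (Fin d))
    (X : Fin m → Ω → Fin d) (hmeas : ∀ t, Measurable (X t))
    (hindep : ProbabilityTheory.iIndepFun X μ)
    (hdist : ∀ t i, μ {ω | X t ω = i} = ENNReal.ofReal (p i))
    (phat : Ω → Fin d → ℝ)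
    (hphat : ∀ ω i, phat ω i = (1 / (m : ℝ)) * ∑ t, if X t ω = i then (1:ℝ) else 0)
    (β : ℝ) (hβ : β ∈ Set.Ioc (0:ℝ) 1) :
    μ {ω | (((Real.log ((m + d - 1).choose (d - 1)) - Real.log β) / m : ℝ) : EReal)
            < klDivFin (phat ω) p}
      ≤ ENNReal.ofReal β := by
  classical
  obtain ⟨hβ0, hβ1⟩ := hβ
  obtain ⟨hp0, hp1⟩ := hp
  set S : Finset (Fin m → Fin d) := univ.filter fun f =>
      (((Real.log ((m + d - 1).choose (d - 1)) - Real.log β) / m : ℝ) : EReal)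
        < klDivFin (fun i => (Stmt6Aux.cnt f i : ℝ) / m) p with hS
  have hphat_eq : ∀ ω, phat ω = fun i => ((Stmt6Aux.cnt (fun t => X t ω) i : ℝ) / m) := by
    intro ω; funext i
    rw [hphat, Finset.sum_boole, one_div, inv_mul_eq_div]
    rfl
  have hsub : {ω | (((Real.log ((m + d - 1).choose (d - 1)) - Real.log β) / m : ℝ) : EReal)
        < klDivFin (phat ω) p} ⊆ ⋃ f ∈ S, {ω | ∀ t, X t ω = f t} := by
    intro ω hω
    refine Set.mem_iUnion₂.mpr ⟨fun t => X t ω, ?_, fun t => rfl⟩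
    refine Finset.mem_filter.mpr ⟨mem_univ _, ?_⟩
    have h2 := hω
    rwa [Set.mem_setOf_eq, hphat_eq ω] at h2
  have hmeasA : ∀ f : Fin m → Fin d,
      μ {ω | ∀ t, X t ω = f t} = ENNReal.ofReal (∏ t, p (f t)) := by
    intro f
    have h := hindep.measure_inter_preimage_eq_mul (S := univ)
      (sets := fun t => {f t}) (fun i _ => measurableSet_singleton _)
    have hset : (⋂ t ∈ (univ : Finset (Fin m)), X t ⁻¹' {f t})
        = {ω | ∀ t, X t ω = f t} := by
      ext ω; simp [Set.mem_iInter, Set.mem_preimage]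
    rw [hset] at h
    have hpre : ∀ t : Fin m, X t ⁻¹' {f t} = {ω | X t ω = f t} := fun t => by
      ext ω; simp [Set.mem_preimage]
    rw [h, Finset.prod_congr rfl (fun t _ => by rw [hpre t, hdist t (f t)]),
      ← ENNReal.ofReal_prod_of_nonneg (fun t _ => hp0 (f t))]
  calc μ {ω | (((Real.log ((m + d - 1).choose (d - 1)) - Real.log β) / m : ℝ) : EReal)
          < klDivFin (phat ω) p}
      ≤ μ (⋃ f ∈ S, {ω | ∀ t, X t ω = f t}) := measure_mono hsub
    _ ≤ ∑ f ∈ S, μ {ω | ∀ t, X t ω = f t} := measure_biUnion_finset_le _ _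
    _ = ∑ f ∈ S, ENNReal.ofReal (∏ t, p (f t)) := Finset.sum_congr rfl fun f _ => hmeasA f
    _ = ENNReal.ofReal (∑ f ∈ S, ∏ t, p (f t)) :=
        (ENNReal.ofReal_sum_of_nonneg fun f _ => Finset.prod_nonneg fun t _ => hp0 (f t)).symm
    _ ≤ ENNReal.ofReal β := ENNReal.ofReal_le_ofReal (by
        rw [hS]
        exact Stmt6Aux.core hd hm p hp0 β hβ0)
end

section
/- Let X_1, …, X_m be i.i.d. random variables taking values in {1, …, d} with common distribution p ∈ Δ_d, and let p̂ be the empirical distribution p̂_i = (1/m) Σ_{t=1}^m 1{X_t = i}. Then for every β ∈ (0,1], P[ Σ_{i=1}^d (√(p̂_i) − √(p_i))² > ( log C(m + d − 1, d − 1) − log β )/m ] ≤ β, where C(n, k) denotes the binomial coefficient. -/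
open MeasureTheory Finset



lemma pt_bound (m : ℕ) (hm : (0:ℝ) < m) (p : ℝ) (hp : 0 ≤ p) (k : ℕ)
    (hpk : k ≠ 0 → 0 < p) :
    p ^ k ≤ Real.exp (2 * m * (Real.sqrt ((k:ℝ)/m) * Real.sqrt p - (k:ℝ)/m)) * ((k:ℝ)/m) ^ k := by
  rcases eq_or_ne k 0 with hk | hk
  · subst hk; simp
  · have hp' : 0 < p := hpk hk
    have hk' : (0:ℝ) < k := by positivity
    set q : ℝ := (k:ℝ)/m with hq
    have hq' : 0 < q := by positivity
    have hkq : (k:ℝ) = m * q := by rw [hq, mul_div_assoc']; exact (mul_div_cancel_left₀ _ hm.ne').symm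
    have h1 : p ^ k = q ^ k * (p/q) ^ k := by
      rw [← mul_pow]; congr 1; field_simp
    have h2 : (p/q) ^ k = Real.exp ((k:ℝ) * Real.log (p/q)) := by
      rw [← Real.log_pow, Real.exp_log (by positivity)]
    have h3 : Real.log (p/q) ≤ 2 * (Real.sqrt (p/q) - 1) := by
      have := Real.log_le_sub_one_of_pos (x := Real.sqrt (p/q)) (by positivity)
      have hl : Real.log (p/q) = 2 * Real.log (Real.sqrt (p/q)) := by
        rw [Real.log_sqrt (by positivity)]; ring
      rw [hl]; linarith
    have h4 : (k:ℝ) * (2 * (Real.sqrt (p/q) - 1)) = 2 * m * (Real.sqrt q * Real.sqrt p - q) := by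
      have hs : Real.sqrt (p/q) = Real.sqrt p / Real.sqrt q := Real.sqrt_div hp q
      have hds : q / Real.sqrt q = Real.sqrt q := Real.div_sqrt
      rw [hs, hkq]
      have he : (m:ℝ) * q * (2 * (Real.sqrt p / Real.sqrt q - 1))
          = 2 * m * ((q / Real.sqrt q) * Real.sqrt p - q) := by ring
      rw [he, hds]
    calc p ^ k = q ^ k * Real.exp ((k:ℝ) * Real.log (p/q)) := by rw [h1, h2]
      _ ≤ q ^ k * Real.exp (2 * m * (Real.sqrt q * Real.sqrt p - q)) := by
          apply mul_le_mul_of_nonneg_left _ (by positivity)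
          apply Real.exp_le_exp.2
          rw [← h4]
          exact mul_le_mul_of_nonneg_left h3 hk'.le
      _ = _ := by ring

lemma type_bound {d : ℕ} (m : ℕ) (hm : (0:ℝ) < m) (p : Fin d → ℝ)
    (hp0 : ∀ i, 0 ≤ p i) (hp1 : ∑ i, p i = 1) (k : Fin d → ℕ) (hk : (∑ i, (k i : ℝ)) = m) :
    ∏ i, p i ^ k i ≤
      Real.exp (-(m:ℝ) * ∑ i, (Real.sqrt ((k i : ℝ)/m) - Real.sqrt (p i))^2)
        * ∏ i, ((k i : ℝ)/m) ^ k i := by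
  have hqsum : ∑ i, ((k i : ℝ)/m) = 1 := by
    rw [← Finset.sum_div, hk]; field_simp
  -- rewrite the exponent
  have hexp : (-(m:ℝ) * ∑ i, (Real.sqrt ((k i : ℝ)/m) - Real.sqrt (p i))^2)
      = ∑ i, 2 * m * (Real.sqrt ((k i : ℝ)/m) * Real.sqrt (p i) - (k i : ℝ)/m) + m * (∑ i, ((k i:ℝ)/m)) - m * (∑ i, p i) := by
    rw [Finset.mul_sum, Finset.mul_sum, Finset.mul_sum, ← Finset.sum_add_distrib,
      ← Finset.sum_sub_distrib]
    apply Finset.sum_congr rfl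
    intro i _
    have h1 := Real.sq_sqrt (show (0:ℝ) ≤ (k i : ℝ)/m by positivity)
    have h2 := Real.sq_sqrt (hp0 i)
    rw [sub_sq, h1, h2]
    ring
  by_cases hz : ∀ i, k i ≠ 0 → 0 < p i
  · calc ∏ i, p i ^ k i
        ≤ ∏ i, (Real.exp (2 * m * (Real.sqrt ((k i : ℝ)/m) * Real.sqrt (p i) - (k i : ℝ)/m)) * ((k i : ℝ)/m) ^ k i) := by
          apply Finset.prod_le_prod (fun i _ => pow_nonneg (hp0 i) _)
          exact fun i _ => pt_bound m hm (p i) (hp0 i) (k i) (hz i)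
      _ = Real.exp (∑ i, 2 * m * (Real.sqrt ((k i : ℝ)/m) * Real.sqrt (p i) - (k i : ℝ)/m)) * ∏ i, ((k i : ℝ)/m) ^ k i := by
          rw [Finset.prod_mul_distrib, Real.exp_sum]
      _ = _ := by
          rw [hexp, hqsum, hp1]
          norm_num
  · push_neg at hz
    obtain ⟨i, hki, hpi⟩ := hz
    have hpi0 : p i = 0 := le_antisymm (by linarith [hp0 i]) (hp0 i)
    have : ∏ i, p i ^ k i = 0 :=
      Finset.prod_eq_zero (Finset.mem_univ i) (by rw [hpi0]; exact zero_pow hki)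
    rw [this]
    positivity

lemma card_types_le (d m : ℕ) (hd : 1 ≤ d) :
    (Finset.Nat.antidiagonalTuple d m).card ≤ (m + d - 1).choose (d - 1) := by
  classical
  have hd0 : 0 < d := hd
  set M : (Fin d → ℕ) → Multiset (Fin d) := fun k => ∑ i, Multiset.replicate (k i) i with hM
  have hcount : ∀ k i, Multiset.count i (M k) = k i := by
    intro k i
    rw [hM]
    simp only [Multiset.count_sum', Multiset.count_replicate]
    simp
  have hcard : ∀ k ∈ Finset.Nat.antidiagonalTuple d m, (M k).card = m := by
    intro k hk
    rw [Finset.Nat.mem_antidiagonalTuple] at hk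
    rw [hM]
    have : Multiset.card (∑ i, Multiset.replicate (k i) i)
        = ∑ i, (Multiset.replicate (k i) i).card :=
      map_sum (⟨⟨Multiset.card, Multiset.card_zero⟩, Multiset.card_add⟩ : Multiset (Fin d) →+ ℕ) _ _
    rw [this]
    simpa using hk
  set g : (Fin d → ℕ) → Sym (Fin d) m := fun k =>
    if h : (M k).card = m then ⟨M k, h⟩ else Sym.replicate m ⟨0, hd0⟩ with hg
  have hinj : Set.InjOn g (Finset.Nat.antidiagonalTuple d m) := by
    intro k1 h1 k2 h2 he
    rw [hg] at he
    simp only [dif_pos (hcard k1 h1), dif_pos (hcard k2 h2)] at he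
    have : M k1 = M k2 := by
      have := congrArg Subtype.val he
      have c1 := hcard k1 h1
      have c2 := hcard k2 h2
      have e1 : ∀ k (hk : (M k).card = m), Subtype.val (if h : (M k).card = m then (⟨M k, h⟩ : Sym (Fin d) m) else Sym.replicate m (⟨0, hd0⟩ : Fin d)) = M k := fun k hk => congrArg Subtype.val (dif_pos (α := Sym (Fin d) m) hk)
      exact (e1 k1 c1).symm.trans (this.trans (e1 k2 c2))
    funext i
    rw [← hcount k1 i, ← hcount k2 i, this]
  calc (Finset.Nat.antidiagonalTuple d m).card
      ≤ (Finset.univ : Finset (Sym (Fin d) m)).card :=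
        Finset.card_le_card_of_injOn g (fun _ _ => Finset.mem_univ _) hinj
    _ = Fintype.card (Sym (Fin d) m) := rfl
    _ = (Fintype.card (Fin d) + m - 1).choose m := Sym.card_sym_eq_choose m
    _ = (m + d - 1).choose (d - 1) := by
        rw [Fintype.card_fin]
        have h1 : d + m - 1 = m + d - 1 := by omega
        have h2 : m + d - 1 - (d - 1) = m := by omega
        have h3 : (m + d - 1).choose (m + d - 1 - (d - 1)) = (m + d - 1).choose (d - 1) :=
          Nat.choose_symm (by omega)
        rw [h2] at h3
        rw [h1, h3]

section aux
variable {d m : ℕ}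

lemma prod_fiber (f : Fin m → Fin d) (g : Fin d → ℝ) :
    ∏ t, g (f t) = ∏ i, g i ^ (univ.filter fun t => f t = i).card := by
  rw [← Finset.prod_fiberwise_of_maps_to' (fun t _ => Finset.mem_univ (f t)) g]
  exact Finset.prod_congr rfl fun i _ => Finset.prod_const _

lemma sum_cnt (f : Fin m → Fin d) :
    ∑ i, (univ.filter fun t => f t = i).card = m := by
  rw [← Finset.card_eq_sum_card_fiberwise (fun t _ => Finset.mem_univ (f t))]
  exact Finset.card_fin m

lemma sum_all_funs (q : Fin d → ℝ) :
    ∑ f : Fin m → Fin d, ∏ t, q (f t) = (∑ i, q i) ^ m := by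
  calc ∑ f : Fin m → Fin d, ∏ t, q (f t)
      = ∏ _t : Fin m, ∑ i, q i := by
        rw [Finset.prod_univ_sum]
        rw [Fintype.piFinset_univ]
    _ = (∑ i, q i) ^ m := by
        rw [Finset.prod_const]
        simp
end aux


/-- Hellinger concentration inequality (Hellinger row of Table I): for `m` i.i.d. samples
from `p ∈ Δ_d`, the squared Hellinger divergence `Σ_i (√(p̂_i) − √(p_i))²` of the empirical
distribution from `p` exceeds `(log C(m+d−1, d−1) − log β)/m` with probability at most `β`. -/
theorem stmt7 {Ω : Type*} [MeasurableSpace Ω] (μ : Measure Ω) [IsProbabilityMeasure μ]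
    {d m : ℕ} (hd : 1 ≤ d) (hm : 1 ≤ m)
    (p : Fin d → ℝ) (hp : p ∈ stdSimplex ℝ (Fin d))
    (X : Fin m → Ω → Fin d) (hmeas : ∀ t, Measurable (X t))
    (hindep : ProbabilityTheory.iIndepFun X μ)
    (hdist : ∀ t i, μ {ω | X t ω = i} = ENNReal.ofReal (p i))
    (phat : Ω → Fin d → ℝ)
    (hphat : ∀ ω i, phat ω i = (1 / (m : ℝ)) * ∑ t, if X t ω = i then (1:ℝ) else 0)
    (β : ℝ) (hβ : β ∈ Set.Ioc (0:ℝ) 1) :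
    μ {ω | ∑ i, (Real.sqrt (phat ω i) - Real.sqrt (p i))^2
            > (Real.log ((m + d - 1).choose (d - 1)) - Real.log β) / m}
      ≤ ENNReal.ofReal β := by
  classical
  obtain ⟨hβ0, _⟩ := hβ
  have hp0 : ∀ i, 0 ≤ p i := hp.1
  have hp1 : ∑ i, p i = 1 := hp.2
  set N : ℕ := (m + d - 1).choose (d - 1) with hN
  have hNpos : 0 < N := Nat.choose_pos (by omega)
  have hN0 : (0:ℝ) < N := by exact_mod_cast hNpos
  have hm' : (0:ℝ) < m := by exact_mod_cast hm
  set tr : ℝ := (Real.log N - Real.log β) / m with htr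
  set cnt : (Fin m → Fin d) → Fin d → ℕ :=
    fun f i => (univ.filter fun t => f t = i).card with hcnt
  have hphat' : ∀ ω i, phat ω i = (cnt (fun t => X t ω) i : ℝ) / m := by
    intro ω i
    rw [hphat ω i, hcnt]
    rw [Finset.sum_boole]
    ring
  set B : (Fin m → Fin d) → Set Ω := fun f => ⋂ t, (X t)⁻¹' {f t} with hB
  set A : (Fin d → ℕ) → Set Ω := fun k => {ω | cnt (fun t => X t ω) = k} with hA
  set Tbad : Finset (Fin d → ℕ) := (Finset.Nat.antidiagonalTuple d m).filter
      (fun k => tr < ∑ i, (Real.sqrt ((k i : ℝ)/m) - Real.sqrt (p i))^2) with hT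
  set F : (Fin d → ℕ) → Finset (Fin m → Fin d) :=
      fun k => univ.filter fun f => cnt f = k with hF
  -- Step 1: the event is covered by the bad types
  have hsub : {ω | ∑ i, (Real.sqrt (phat ω i) - Real.sqrt (p i))^2 > tr}
      ⊆ ⋃ k ∈ Tbad, A k := by
    intro ω hω
    simp only [Set.mem_setOf_eq] at hω
    have hmem : cnt (fun t => X t ω) ∈ Tbad := by
      rw [hT, Finset.mem_filter, Finset.Nat.mem_antidiagonalTuple]
      refine ⟨sum_cnt _, ?_⟩
      have he : ∑ i, (Real.sqrt (phat ω i) - Real.sqrt (p i))^2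
          = ∑ i, (Real.sqrt ((cnt (fun t => X t ω) i : ℝ)/m) - Real.sqrt (p i))^2 :=
        Finset.sum_congr rfl fun i _ => by rw [hphat' ω i]
      rw [← he]; exact hω
    exact Set.mem_biUnion hmem rfl
  -- Step 2: each type event is covered by sample-paths events
  have hAsub : ∀ k, A k ⊆ ⋃ f ∈ F k, B f := by
    intro k ω hω
    refine Set.mem_biUnion (show (fun t => X t ω) ∈ F k by
      rw [hF, Finset.mem_filter]; exact ⟨Finset.mem_univ _, hω⟩) ?_
    exact Set.mem_iInter.2 fun t => rfl
  -- Step 3: probability of a sample path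
  have hBmeas : ∀ f : Fin m → Fin d, μ (B f) = ENNReal.ofReal (∏ t, p (f t)) := by
    intro f
    rw [hB]
    have := hindep.meas_iInter (s := fun t => (X t)⁻¹' {f t})
      (fun t => ⟨{f t}, measurableSet_singleton _, rfl⟩)
    rw [this]
    exact (Finset.prod_congr rfl fun t _ => hdist t (f t)).trans
      (ENNReal.ofReal_prod_of_nonneg (fun t _ => hp0 (f t))).symm
  -- Step 4: key real bound per bad type
  have hkey : ∀ k ∈ Tbad, ∑ f ∈ F k, ∏ t, p (f t) ≤ β / N := by
    intro k hk
    rw [hT, Finset.mem_filter, Finset.Nat.mem_antidiagonalTuple] at hk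
    obtain ⟨hksum, hkbad⟩ := hk
    have hksum' : ∑ i, (k i : ℝ) = m := by exact_mod_cast hksum
    set q : Fin d → ℝ := fun i => (k i : ℝ)/m with hq
    have hq0 : ∀ i, 0 ≤ q i := fun i => by positivity
    have hqsum : ∑ i, q i = 1 := by
      rw [hq]; rw [← Finset.sum_div, hksum']; field_simp
    have hexp_le : Real.exp (-(m:ℝ) * ∑ i, (Real.sqrt ((k i:ℝ)/m) - Real.sqrt (p i))^2)
        ≤ β / N := by
      have h1 : Real.exp (-(m:ℝ) * ∑ i, (Real.sqrt ((k i:ℝ)/m) - Real.sqrt (p i))^2)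
          ≤ Real.exp (-(m:ℝ) * tr) := by
        apply Real.exp_le_exp.2
        nlinarith [hkbad, hm']
      have h2 : Real.exp (-(m:ℝ) * tr) = β / N := by
        rw [htr]
        have he : -(m:ℝ) * ((Real.log N - Real.log β) / m) = Real.log β - Real.log N := by
          field_simp
          ring
        rw [he, Real.exp_sub, Real.exp_log hβ0, Real.exp_log hN0]
      linarith
    have step1 : ∀ f ∈ F k, ∏ t, p (f t) ≤ (β/N) * ∏ t, q (f t) := by
      intro f hf
      have hcf : cnt f = k := (Finset.mem_filter.1 hf).2
      have e1 : ∏ t, p (f t) = ∏ i, p i ^ k i :=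
        (prod_fiber f p).trans (Finset.prod_congr rfl fun i _ => by
          rw [show (univ.filter fun t => f t = i).card = k i from congrFun hcf i])
      have e2 : ∏ t, q (f t) = ∏ i, q i ^ k i :=
        (prod_fiber f q).trans (Finset.prod_congr rfl fun i _ => by
          rw [show (univ.filter fun t => f t = i).card = k i from congrFun hcf i])
      rw [e1, e2]
      calc ∏ i, p i ^ k i
          ≤ Real.exp (-(m:ℝ) * ∑ i, (Real.sqrt ((k i:ℝ)/m) - Real.sqrt (p i))^2)
            * ∏ i, q i ^ k i := type_bound m hm' p hp0 hp1 k hksum'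
        _ ≤ (β/N) * ∏ i, q i ^ k i := by
            apply mul_le_mul_of_nonneg_right hexp_le
            exact Finset.prod_nonneg fun i _ => pow_nonneg (hq0 i) _
    calc ∑ f ∈ F k, ∏ t, p (f t)
        ≤ ∑ f ∈ F k, (β/N) * ∏ t, q (f t) := Finset.sum_le_sum step1
      _ ≤ ∑ f : Fin m → Fin d, (β/N) * ∏ t, q (f t) := by
          apply Finset.sum_le_sum_of_subset_of_nonneg (Finset.filter_subset _ _)
          intro f _ _
          have : 0 ≤ ∏ t, q (f t) := Finset.prod_nonneg fun t _ => hq0 (f t)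
          positivity
      _ = β / N := by
          rw [← Finset.mul_sum, sum_all_funs, hqsum, one_pow, mul_one]
  -- Step 5: assemble
  calc μ {ω | ∑ i, (Real.sqrt (phat ω i) - Real.sqrt (p i))^2 > tr}
      ≤ μ (⋃ k ∈ Tbad, A k) := measure_mono hsub
    _ ≤ ∑ k ∈ Tbad, μ (A k) := measure_biUnion_finset_le _ _
    _ ≤ ∑ k ∈ Tbad, ENNReal.ofReal (β / N) := by
        apply Finset.sum_le_sum
        intro k hk
        calc μ (A k) ≤ μ (⋃ f ∈ F k, B f) := measure_mono (hAsub k)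
          _ ≤ ∑ f ∈ F k, μ (B f) := measure_biUnion_finset_le _ _
          _ = ENNReal.ofReal (∑ f ∈ F k, ∏ t, p (f t)) := by
              rw [ENNReal.ofReal_sum_of_nonneg
                (fun f _ => Finset.prod_nonneg fun t _ => hp0 (f t))]
              exact Finset.sum_congr rfl fun f _ => hBmeas f
          _ ≤ ENNReal.ofReal (β / N) := ENNReal.ofReal_le_ofReal (hkey k hk)
    _ = (Tbad.card : ENNReal) * ENNReal.ofReal (β / N) := by
        rw [Finset.sum_const, nsmul_eq_mul]
    _ ≤ (N : ENNReal) * ENNReal.ofReal (β / N) := by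
        apply mul_le_mul_left
        have hcard : Tbad.card ≤ N := le_trans
          (Finset.card_le_card (by rw [hT]; exact Finset.filter_subset _ _))
          (card_types_le d m hd)
        exact_mod_cast hcard
    _ = ENNReal.ofReal β := by
        rw [← ENNReal.ofReal_natCast N, ← ENNReal.ofReal_mul (by positivity)]
        congr 1
        field_simp
end

section
/- Let p, p̂ ∈ Δ_d and r ∈ ℝ. Then Σ_{i=1}^d (√(p_i) − √(p̂_i))² ≤ r if and only if there exists ν ∈ ℝ^d such that 1 − r/2 ≤ Σ_{i=1}^d √(p̂_i)·ν_i and ν_i² ≤ p_i for all i. -/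
open Finset

/-- Second-order-cone reformulation of Hellinger-ball ambiguity sets (Appendix A):
for `p, p̂ ∈ Δ_d`, `Σ_i (√(p_i) − √(p̂_i))² ≤ r` iff there exists `ν` with
`1 − r/2 ≤ Σ_i √(p̂_i)·ν_i` and `ν_i² ≤ p_i` for all `i`. -/
theorem stmt10 {d : ℕ} (p phat : Fin d → ℝ)
    (hp : p ∈ stdSimplex ℝ (Fin d)) (hphat : phat ∈ stdSimplex ℝ (Fin d)) (r : ℝ) :
    (∑ i, (Real.sqrt (p i) - Real.sqrt (phat i))^2 ≤ r) ↔
      ∃ ν : Fin d → ℝ, 1 - r / 2 ≤ ∑ i, Real.sqrt (phat i) * ν i ∧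
        ∀ i, (ν i)^2 ≤ p i := by
  obtain ⟨hp0, hp1⟩ := hp
  obtain ⟨hq0, hq1⟩ := hphat
  have key : ∑ i, (Real.sqrt (p i) - Real.sqrt (phat i))^2
      = 2 - 2 * ∑ i, Real.sqrt (phat i) * Real.sqrt (p i) := by
    have : ∀ i ∈ Finset.univ, (Real.sqrt (p i) - Real.sqrt (phat i))^2
        = p i + phat i - 2 * (Real.sqrt (phat i) * Real.sqrt (p i)) := by
      intro i _
      have h1 : Real.sqrt (p i) ^ 2 = p i := Real.sq_sqrt (hp0 i)
      have h2 : Real.sqrt (phat i) ^ 2 = phat i := Real.sq_sqrt (hq0 i)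
      ring_nf
      nlinarith [h1, h2]
    rw [Finset.sum_congr rfl this]
    rw [Finset.sum_sub_distrib, Finset.sum_add_distrib, hp1, hq1,
      ← Finset.mul_sum]
    ring
  rw [key]
  constructor
  · intro h
    refine ⟨fun i => Real.sqrt (p i), by linarith, fun i => le_of_eq (Real.sq_sqrt (hp0 i))⟩
  · rintro ⟨ν, hν1, hν2⟩
    have hle : ∑ i, Real.sqrt (phat i) * ν i ≤ ∑ i, Real.sqrt (phat i) * Real.sqrt (p i) := by
      apply Finset.sum_le_sum
      intro i _
      apply mul_le_mul_of_nonneg_left _ (Real.sqrt_nonneg _)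
      calc ν i ≤ |ν i| := le_abs_self _
        _ = Real.sqrt ((ν i)^2) := (Real.sqrt_sq_eq_abs _).symm
        _ ≤ Real.sqrt (p i) := Real.sqrt_le_sqrt (hν2 i)
    linarith
end

section
/- Let V^t : ℝⁿ → ℝ ∪ {+∞} (t ∈ ℕ) be a sequence of proper lower semicontinuous functions and let V : ℝⁿ → ℝ ∪ {+∞} be proper, lower semicontinuous and level-bounded. Suppose (i) there exists T ∈ ℕ such that for all t > T and all u ∈ ℝⁿ, V^t(u) ≥ V(u); and (ii) for every u ∈ ℝⁿ, lim_{t→∞} V^t(u) = V(u). Then lim_{t→∞} inf_{u ∈ ℝⁿ} V^t(u) = inf_{u ∈ ℝⁿ} V(u). -/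
open Filter

/-- Infimum convergence lemma (Appendix, Lemma on epi-convergence): if the proper lsc
functions `V^t : ℝⁿ → ℝ ∪ {+∞}` eventually dominate the proper, lsc, level-bounded
function `V` and converge to it pointwise, then their infima converge to the infimum
of `V`.  Functions with values in `ℝ ∪ {+∞}` are modeled as `EReal`-valued functions
never taking the value `⊥`; properness means not identically `+∞`. -/
theorem stmt12 {n : ℕ} (Vt : ℕ → (Fin n → ℝ) → EReal) (V : (Fin n → ℝ) → EReal)
    (hVt_ne_bot : ∀ t u, Vt t u ≠ ⊥)
    (hVt_proper : ∀ t, ∃ u, Vt t u ≠ ⊤)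
    (hVt_lsc : ∀ t, LowerSemicontinuous (Vt t))
    (hV_ne_bot : ∀ u, V u ≠ ⊥)
    (hV_proper : ∃ u, V u ≠ ⊤)
    (hV_lsc : LowerSemicontinuous V)
    (hV_level_bounded : ∀ c : ℝ, Bornology.IsBounded {u | V u ≤ (c : EReal)})
    (hub : ∃ T : ℕ, ∀ t > T, ∀ u, V u ≤ Vt t u)
    (hpt : ∀ u, Tendsto (fun t => Vt t u) atTop (nhds (V u))) :
    Tendsto (fun t => ⨅ u, Vt t u) atTop (nhds (⨅ u, V u)) := by
  obtain ⟨T, hT⟩ := hub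
  have hliminf : (⨅ u, V u) ≤ liminf (fun t => ⨅ u, Vt t u) atTop := by
    refine le_liminf_of_le (by isBoundedDefault) ?_
    filter_upwards [eventually_gt_atTop T] with t ht
    exact le_iInf fun u => (iInf_le V u).trans (hT t ht u)
  have hlimsup : limsup (fun t => ⨅ u, Vt t u) atTop ≤ ⨅ u, V u := by
    refine le_iInf fun u => ?_
    have h1 : limsup (fun t => ⨅ v, Vt t v) atTop ≤ limsup (fun t => Vt t u) atTop :=
      limsup_le_limsup (Eventually.of_forall fun t => iInf_le _ u)
    have h2 : limsup (fun t => Vt t u) atTop = V u := (hpt u).limsup_eq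
    exact h1.trans_eq h2
  exact tendsto_of_le_liminf_of_limsup_le hliminf hlimsup
end

section
/- Let (Ω, F, P) be a probability space, let c > 0, r ≥ 0 and V̄ ≥ 0 be constants, and let (β_t)_{t∈ℕ} be a nonnegative real sequence with Σ_{t=0}^∞ β_t < ∞. Let (V_t)_{t∈ℕ} be measurable functions V_t : Ω → [0, V̄], let (g_t)_{t∈ℕ} be measurable functions g_t : Ω → [0, r], and let (E_t)_{t∈ℕ} be events with P(E_t) ≥ 1 − β_t, such that for every t, ∫_{E_t} (V_{t+1} − V_t) dP ≤ −c·∫_{E_t} g_t dP. Then Σ_{t=0}^∞ E[g_t] ≤ V̄·(1 + Σ_t β_t)/c + r·Σ_t β_t < ∞, and consequently lim_{t→∞} E[g_t] = 0. -/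
open MeasureTheory Filter

/-- Probabilistic core of Lemma 1 (distributionally robust mean-square stability):
if the uniformly bounded nonnegative functions `V_t` satisfy the Lyapunov decrease
`∫_{E_t} (V_{t+1} − V_t) ≤ −c·∫_{E_t} g_t` on events `E_t` with `P(E_t) ≥ 1 − β_t` and
`Σ β_t < ∞`, then `Σ_t E[g_t] ≤ V̄(1 + Σβ_t)/c + r·Σβ_t < ∞` and `E[g_t] → 0`. -/
theorem stmt13 {Ω : Type*} [MeasurableSpace Ω] (μ : Measure Ω) [IsProbabilityMeasure μ]
    (c r Vbar : ℝ) (hc : 0 < c) (hr : 0 ≤ r) (hVbar : 0 ≤ Vbar)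
    (β : ℕ → ℝ) (hβ : ∀ t, 0 ≤ β t) (hβsum : Summable β)
    (V : ℕ → Ω → ℝ) (hVmeas : ∀ t, Measurable (V t))
    (hVbdd : ∀ t ω, V t ω ∈ Set.Icc 0 Vbar)
    (g : ℕ → Ω → ℝ) (hgmeas : ∀ t, Measurable (g t))
    (hgbdd : ∀ t ω, g t ω ∈ Set.Icc 0 r)
    (E : ℕ → Set Ω) (hEmeas : ∀ t, MeasurableSet (E t))
    (hPE : ∀ t, 1 - β t ≤ (μ (E t)).toReal)
    (hdec : ∀ t, ∫ ω in E t, (V (t+1) ω - V t ω) ∂μ ≤ -c * ∫ ω in E t, g t ω ∂μ) :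
    Summable (fun t => ∫ ω, g t ω ∂μ) ∧
      (∑' t, ∫ ω, g t ω ∂μ) ≤ Vbar * (1 + ∑' t, β t) / c + r * ∑' t, β t ∧
      Tendsto (fun t => ∫ ω, g t ω ∂μ) atTop (nhds 0) := by
  have hVint : ∀ t, Integrable (V t) μ := fun t =>
    (integrable_const Vbar).mono' (hVmeas t).aestronglyMeasurable
      (Filter.Eventually.of_forall fun ω => by
        have h := hVbdd t ω
        rw [Real.norm_eq_abs, abs_of_nonneg h.1]; exact h.2)
  have hgint : ∀ t, Integrable (g t) μ := fun t =>
    (integrable_const r).mono' (hgmeas t).aestronglyMeasurable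
      (Filter.Eventually.of_forall fun ω => by
        have h := hgbdd t ω
        rw [Real.norm_eq_abs, abs_of_nonneg h.1]; exact h.2)
  have hcompl : ∀ t, (μ (E t)ᶜ).toReal ≤ β t := by
    intro t
    have h1 : (μ (E t)ᶜ).toReal = 1 - (μ (E t)).toReal := by
      rw [measure_compl (hEmeas t) (measure_ne_top μ _), measure_univ,
        ENNReal.toReal_sub_of_le (prob_le_one) (by simp), ENNReal.toReal_one]
    rw [h1]
    linarith [hPE t]
  set a : ℕ → ℝ := fun t => ∫ ω, g t ω ∂μ with ha
  set S : ℕ → ℝ := fun t => ∫ ω in E t, V t ω ∂μ with hS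
  -- generic bound for set integrals of bounded functions on complements
  have hsetbd : ∀ (f : Ω → ℝ) (C : ℝ), 0 ≤ C → Measurable f → (∀ ω, f ω ∈ Set.Icc 0 C) →
      ∀ t, ∫ ω in (E t)ᶜ, f ω ∂μ ≤ C * β t := by
    intro f C hC hfm hf t
    have h1 : ‖∫ ω in (E t)ᶜ, f ω ∂μ‖ ≤ C * (μ (E t)ᶜ).toReal := by
      apply norm_setIntegral_le_of_norm_le_const (measure_lt_top μ _)
      · intro x _
        have h := hf x
        rw [Real.norm_eq_abs, abs_of_nonneg h.1]; exact h.2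
    calc ∫ ω in (E t)ᶜ, f ω ∂μ ≤ ‖∫ ω in (E t)ᶜ, f ω ∂μ‖ := le_abs_self _
      _ ≤ C * (μ (E t)ᶜ).toReal := h1
      _ ≤ C * β t := mul_le_mul_of_nonneg_left (hcompl t) hC
  have hSnonneg : ∀ t, 0 ≤ S t := fun t =>
    setIntegral_nonneg (hEmeas t) (fun ω _ => (hVbdd t ω).1)
  have hS0 : S 0 ≤ Vbar := by
    calc S 0 ≤ ∫ ω, V 0 ω ∂μ :=
          setIntegral_le_integral (hVint 0)
            (Filter.Eventually.of_forall fun ω => (hVbdd 0 ω).1)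
      _ ≤ ∫ _ω, Vbar ∂μ :=
          integral_mono (hVint 0) (integrable_const _) (fun ω => (hVbdd 0 ω).2)
      _ = Vbar := by simp
  have key : ∀ t, c * a t ≤ S t - S (t + 1) + (Vbar + c * r) * β t := by
    intro t
    have hgE : a t ≤ (∫ ω in E t, g t ω ∂μ) + r * β t := by
      have hsplit : (∫ ω in E t, g t ω ∂μ) + (∫ ω in (E t)ᶜ, g t ω ∂μ) = a t :=
        integral_add_compl (hEmeas t) (hgint t)
      have := hsetbd (g t) r hr (hgmeas t) (hgbdd t) t
      linarith
    have hVE : S (t + 1) ≤ (∫ ω in E t, V (t + 1) ω ∂μ) + Vbar * β t := by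
      have hsplit : (∫ ω in E t, V (t+1) ω ∂μ) + (∫ ω in (E t)ᶜ, V (t+1) ω ∂μ)
          = ∫ ω, V (t+1) ω ∂μ := integral_add_compl (hEmeas t) (hVint (t+1))
      have h1 : S (t + 1) ≤ ∫ ω, V (t+1) ω ∂μ :=
        setIntegral_le_integral (hVint (t+1))
          (Filter.Eventually.of_forall fun ω => (hVbdd (t+1) ω).1)
      have h2 := hsetbd (V (t+1)) Vbar hVbar (hVmeas (t+1)) (hVbdd (t+1)) t
      linarith
    have hdec' : (∫ ω in E t, V (t+1) ω ∂μ) - S t ≤ -c * ∫ ω in E t, g t ω ∂μ := by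
      have := hdec t
      rwa [integral_sub ((hVint (t+1)).integrableOn) ((hVint t).integrableOn)] at this
    have hmul : c * (a t - r * β t) ≤ c * ∫ ω in E t, g t ω ∂μ :=
      mul_le_mul_of_nonneg_left (by linarith) hc.le
    nlinarith
  have hper : ∀ N, c * ∑ t ∈ Finset.range N, a t ≤
      S 0 - S N + (Vbar + c * r) * ∑ t ∈ Finset.range N, β t := by
    intro N
    induction N with
    | zero => simp
    | succ n ih =>
      rw [Finset.sum_range_succ, Finset.sum_range_succ, mul_add, mul_add]
      have := key n
      linarith
  set B : ℝ := Vbar * (1 + ∑' t, β t) / c + r * ∑' t, β t with hB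
  have hβts : ∀ N, ∑ t ∈ Finset.range N, β t ≤ ∑' t, β t := fun N =>
    Summable.sum_le_tsum _ (fun t _ => hβ t) hβsum
  have hbound : ∀ N, ∑ t ∈ Finset.range N, a t ≤ B := by
    intro N
    have h1 : c * ∑ t ∈ Finset.range N, a t ≤ Vbar + (Vbar + c * r) * ∑' t, β t := by
      have h2 := hper N
      have h3 : (Vbar + c * r) * ∑ t ∈ Finset.range N, β t
          ≤ (Vbar + c * r) * ∑' t, β t :=
        mul_le_mul_of_nonneg_left (hβts N) (by positivity)
      linarith [hSnonneg N]
    rw [hB]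
    rw [div_add' _ _ _ hc.ne', le_div_iff₀ hc]
    nlinarith
  have hanonneg : ∀ t, 0 ≤ a t := fun t => integral_nonneg fun ω => (hgbdd t ω).1
  have hsum : Summable a := summable_of_sum_range_le hanonneg hbound
  exact ⟨hsum, Summable.tsum_le_of_sum_range_le hsum hbound, hsum.tendsto_atTop_zero⟩
end
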